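/- arXiv:2411.17250 — 11 statements merged into one kernel-verified Lean document; each statement's English description precedes it below -/
import Mathlib

section
/- Let A be a weakly acyclic NFA over a finite alphabet Σ with state set Q. Then the DFA obtained from A by the powerset construction — whose states are the subsets of Q, whose transition function is δ'(S, a) = ⋃_{q ∈ S} δ(q, a), whose initial state is {q₀}, and whose accepting states are the subsets intersecting the accepting states of A — is a weakly acyclic DFA. -/
/-!
In a weakly acyclic NFA, a state that reaches itself along a word is stuck on every letter of
that word, so reachability is a partial order on the finite state set. If a word `w` maps a set
`S` of states onto itself, each `q ∈ S` has a `w`-predecessor in `S`; well-founded induction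
along strict reachability shows that this predecessor must be `q` itself. Hence every state of
`S` self-loops on every letter of `w`, and such a letter fixes `S` in the powerset automaton.
-/

/-- A DFA is *weakly acyclic* if whenever a nonempty word `w` loops on a state `q`,
every letter occurring in `w` self-loops on `q`. -/
def DFA.WeaklyAcyclic {α : Type*} {σ : Type*} (A : DFA α σ) : Prop :=
  ∀ (q : σ) (w : List α), w ≠ [] → A.evalFrom q w = q → ∀ a ∈ w, A.step q a = q

/-- A language is weakly acyclic if it is accepted by some weakly acyclic DFA
with finitely many states. -/
def Language.IsWeaklyAcyclic {α : Type*} (L : Language α) : Prop :=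
  ∃ (σ : Type) (_ : Fintype σ) (A : DFA α σ), A.WeaklyAcyclic ∧ A.accepts = L

/-- The residual of the language `L` with respect to the word `u`. -/
def Language.residual {α : Type*} (L : Language α) (u : List α) : Language α :=
  {v | u ++ v ∈ L}

/-- An NFA is *weakly acyclic* if whenever `q ∈ δ(q, w)` for a nonempty word `w`,
every letter occurring in `w` satisfies `δ(q, a) = {q}`. -/
def NFA.WeaklyAcyclic {α : Type*} {σ : Type*} (M : NFA α σ) : Prop :=
  ∀ (q : σ) (w : List α), w ≠ [] → q ∈ M.evalFrom {q} w → ∀ a ∈ w, M.step q a = {q}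

namespace NFA

variable {α σ : Type*} (M : NFA α σ)

theorem evalFrom_subset_evalFrom_append {S : Set σ} {q : σ} {u : List α}
    (hq : q ∈ M.evalFrom S u) (v : List α) : M.evalFrom {q} v ⊆ M.evalFrom S (u ++ v) := by
  rw [evalFrom_append, ← Set.union_eq_right.2 (Set.singleton_subset_iff.2 hq), evalFrom_union]
  exact Set.subset_union_left

theorem evalFrom_singleton_eq_of_step_eq {q : σ} {w : List α}
    (hw : ∀ a ∈ w, M.step q a = {q}) : M.evalFrom {q} w = {q} := by
  induction w with
  | nil => rfl
  | cons a w ih =>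
    rw [evalFrom_cons, stepSet_singleton, hw a List.mem_cons_self]
    exact ih fun b hb => hw b (List.mem_cons_of_mem a hb)

theorem stepSet_eq_self_of_step_eq {S : Set σ} {a : α}
    (hS : ∀ q ∈ S, M.step q a = {q}) : M.stepSet S a = S := by
  ext q
  rw [mem_stepSet]
  constructor
  · rintro ⟨p, hp, hq⟩
    rw [hS p hp, Set.mem_singleton_iff] at hq
    exact hq ▸ hp
  · exact fun hq => ⟨q, hq, by rw [hS q hq]; rfl⟩

def Reaches (p q : σ) : Prop :=
  ∃ u : List α, q ∈ M.evalFrom {p} u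

variable {M}

theorem Reaches.trans {p q r : σ} (hpq : M.Reaches p q) (hqr : M.Reaches q r) :
    M.Reaches p r := by
  obtain ⟨u, hu⟩ := hpq
  obtain ⟨v, hv⟩ := hqr
  exact ⟨u ++ v, M.evalFrom_subset_evalFrom_append hu v hv⟩

namespace WeaklyAcyclic

theorem step_eq_of_mem_evalFrom (hM : M.WeaklyAcyclic) {q : σ} {w : List α}
    (hq : q ∈ M.evalFrom {q} w) : ∀ a ∈ w, M.step q a = {q} := by
  rcases eq_or_ne w [] with rfl | hw
  · simp
  · exact hM q w hw hq

theorem evalFrom_singleton_eq_of_mem (hM : M.WeaklyAcyclic) {q : σ} {w : List α}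
    (hq : q ∈ M.evalFrom {q} w) : M.evalFrom {q} w = {q} :=
  M.evalFrom_singleton_eq_of_step_eq (hM.step_eq_of_mem_evalFrom hq)

theorem reaches_antisymm (hM : M.WeaklyAcyclic) {p q : σ} (hpq : M.Reaches p q)
    (hqp : M.Reaches q p) : p = q := by
  obtain ⟨u, hu⟩ := hpq
  obtain ⟨v, hv⟩ := hqp
  have hloop : p ∈ M.evalFrom {p} (u ++ v) := M.evalFrom_subset_evalFrom_append hu v hv
  have hself : M.evalFrom {p} u = {p} := M.evalFrom_singleton_eq_of_step_eq fun a ha =>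
    hM.step_eq_of_mem_evalFrom hloop a (List.mem_append_left v ha)
  rw [hself] at hu
  exact hu.symm

theorem wellFounded_reaches_ne [Finite σ] (hM : M.WeaklyAcyclic) :
    WellFounded fun p q : σ => M.Reaches p q ∧ p ≠ q := by
  have : IsTrans σ fun p q => M.Reaches p q ∧ p ≠ q :=
    ⟨fun _ _ _ ⟨hpq, hne⟩ ⟨hqr, _⟩ =>
      ⟨hpq.trans hqr, fun hpr => hne (hM.reaches_antisymm hpq (hpr ▸ hqr))⟩⟩
  have : Std.Irrefl fun p q : σ => M.Reaches p q ∧ p ≠ q := ⟨fun _ h => h.2 rfl⟩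
  exact Finite.wellFounded_of_trans_of_irrefl _

theorem mem_evalFrom_self_of_evalFrom_eq [Finite σ] (hM : M.WeaklyAcyclic) {S : Set σ}
    {w : List α} (hS : M.evalFrom S w = S) {q : σ} (hq : q ∈ S) : q ∈ M.evalFrom {q} w := by
  induction q using hM.wellFounded_reaches_ne.induction with
  | _ q ih =>
    obtain ⟨p, hp, hpq⟩ := mem_evalFrom_iff_exists.1 (hS.symm ▸ hq : q ∈ M.evalFrom S w)
    by_cases hne : p = q
    · exact hne ▸ hpq
    -- `p` lies strictly above `q`, so by induction `w` loops on `p`, which pins down `q = p`.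
    have hloop := hM.evalFrom_singleton_eq_of_mem (ih p ⟨⟨w, hpq⟩, hne⟩ hp)
    rw [hloop, Set.mem_singleton_iff] at hpq
    exact absurd hpq.symm hne

end WeaklyAcyclic

end NFA

theorem powerset_of_weaklyAcyclic_nfa_general {α σ : Type} [Fintype σ]
    (M : NFA α σ)
    (h : M.WeaklyAcyclic) : M.toDFA.WeaklyAcyclic := by
  intro S w _ hS a ha
  exact M.stepSet_eq_self_of_step_eq fun q hq =>
    h.step_eq_of_mem_evalFrom (h.mem_evalFrom_self_of_evalFrom_eq hS hq) a ha

/-- The powerset construction applied to a weakly acyclic NFA yields a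
weakly acyclic DFA. -/
theorem powerset_of_weaklyAcyclic_nfa {α σ : Type} [Fintype α] [Fintype σ]
    (M : NFA α σ) (q₀ : σ) (hstart : M.start = {q₀})
    (h : M.WeaklyAcyclic) : M.toDFA.WeaklyAcyclic :=
  powerset_of_weaklyAcyclic_nfa_general M h
end

section
/- Let L ⊆ Σ* be a language accepted by some weakly acyclic DFA, and let B be a DFA accepting L in which every state is reachable from the initial state and distinct states accept distinct languages (i.e., B is a minimal DFA for L). Then B is weakly acyclic. -/
lemma acceptsFrom_evalFrom {α σ : Type*} (M : DFA α σ) (q : σ) (u : List α) :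
    M.acceptsFrom (M.evalFrom q u) = (M.acceptsFrom q).residual u := by
  ext v
  simp only [DFA.mem_acceptsFrom, Language.residual, Set.mem_setOf_eq,
    ← DFA.evalFrom_of_append]
  rfl

lemma evalFrom_flatten_replicate {α σ : Type*} (M : DFA α σ) (w : List α) (n : ℕ) (q : σ) :
    M.evalFrom q (List.replicate n w).flatten = (fun s => M.evalFrom s w)^[n] q := by
  induction n generalizing q with
  | zero => rfl
  | succ n ih =>
    rw [List.replicate_succ, List.flatten_cons, DFA.evalFrom_of_append,
      Function.iterate_succ_apply, ih]

/-- A minimal DFA (all states reachable, distinct states accept distinct languages)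
for a language accepted by some weakly acyclic DFA is itself weakly acyclic. -/
theorem minimal_dfa_weaklyAcyclic {α : Type} [Fintype α] {σ σ' : Type}
    [Fintype σ] [Fintype σ']
    (A : DFA α σ) (hA : A.WeaklyAcyclic)
    (B : DFA α σ') (hBA : B.accepts = A.accepts)
    (hreach : ∀ q : σ', ∃ w : List α, B.evalFrom B.start w = q)
    (hdist : ∀ p q : σ', B.acceptsFrom p = B.acceptsFrom q → p = q) :
    B.WeaklyAcyclic := by
  intro q w hw hloop a ha
  obtain ⟨x, hx⟩ := hreach q
  set p := A.evalFrom A.start x with hp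
  have hpq : B.acceptsFrom q = A.acceptsFrom p := by
    rw [← hx, hp, acceptsFrom_evalFrom, acceptsFrom_evalFrom]
    show (B.accepts).residual x = (A.accepts).residual x
    rw [hBA]
  set g : ℕ → σ := fun n => (fun s => A.evalFrom s w)^[n] p with hg
  obtain ⟨i, j, hne, hgij⟩ := Finite.exists_ne_map_eq_of_infinite g
  wlog hij : i < j generalizing i j
  · exact this j i hne.symm hgij.symm (by omega)
  set r := g i with hr
  have hloopB : ∀ n, (fun s => B.evalFrom s w)^[n] q = q := by
    intro n; induction n with
    | zero => rfl
    | succ n ih => rw [Function.iterate_succ_apply, hloop, ih]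
  have hqB : ∀ n, B.evalFrom q (List.replicate n w).flatten = q := fun n => by
    rw [evalFrom_flatten_replicate, hloopB]
  have hrloop : A.evalFrom r (List.replicate (j - i) w).flatten = r := by
    rw [evalFrom_flatten_replicate, hr, hg, ← Function.iterate_add_apply]
    have : j - i + i = j := by omega
    rw [this]; exact hgij.symm
  have hmem : a ∈ (List.replicate (j - i) w).flatten :=
    List.mem_flatten.2 ⟨w, List.mem_replicate.2 ⟨by omega, rfl⟩, ha⟩
  have hstepA : A.step r a = r :=
    hA r _ (List.ne_nil_of_mem hmem) hrloop a hmem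
  have hracc : A.acceptsFrom r = B.acceptsFrom q := by
    have h1 : r = A.evalFrom p (List.replicate i w).flatten := by
      rw [evalFrom_flatten_replicate]
    calc A.acceptsFrom r = (A.acceptsFrom p).residual (List.replicate i w).flatten := by
          rw [h1, acceptsFrom_evalFrom]
      _ = (B.acceptsFrom q).residual (List.replicate i w).flatten := by rw [hpq]
      _ = B.acceptsFrom (B.evalFrom q (List.replicate i w).flatten) :=
          (acceptsFrom_evalFrom ..).symm
      _ = B.acceptsFrom q := by rw [hqB]
  apply hdist
  calc B.acceptsFrom (B.step q a) = B.acceptsFrom (B.evalFrom q [a]) := rfl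
    _ = (B.acceptsFrom q).residual [a] := acceptsFrom_evalFrom ..
    _ = (A.acceptsFrom r).residual [a] := by rw [hracc]
    _ = A.acceptsFrom (A.evalFrom r [a]) := (acceptsFrom_evalFrom ..).symm
    _ = A.acceptsFrom r := by show A.acceptsFrom (A.step r a) = _; rw [hstepA]
    _ = B.acceptsFrom q := hracc
end

section
/- Weakly acyclic languages over a finite alphabet Σ are closed under complementation, union, and intersection: if K ⊆ Σ* and L ⊆ Σ* are weakly acyclic, then Σ* \ L, K ∪ L, and K ∩ L are weakly acyclic. -/
/-- Product DFA. -/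
def DFA.myProd {α σ₁ σ₂ : Type*} (A : DFA α σ₁) (B : DFA α σ₂)
    (acc : Set (σ₁ × σ₂)) : DFA α (σ₁ × σ₂) :=
  ⟨fun p a => (A.step p.1 a, B.step p.2 a), (A.start, B.start), acc⟩

theorem DFA.myProd_evalFrom {α σ₁ σ₂ : Type*} (A : DFA α σ₁) (B : DFA α σ₂)
    (acc : Set (σ₁ × σ₂)) (p : σ₁ × σ₂) (w : List α) :
    (A.myProd B acc).evalFrom p w = (A.evalFrom p.1 w, B.evalFrom p.2 w) := by
  induction w generalizing p with
  | nil => simp [DFA.evalFrom]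
  | cons a w ih =>
    simp only [DFA.evalFrom, List.foldl_cons] at *
    exact ih _

theorem DFA.myProd_weaklyAcyclic {α σ₁ σ₂ : Type*} {A : DFA α σ₁} {B : DFA α σ₂}
    (hA : A.WeaklyAcyclic) (hB : B.WeaklyAcyclic) (acc : Set (σ₁ × σ₂)) :
    (A.myProd B acc).WeaklyAcyclic := by
  intro q w hw hloop a ha
  rw [DFA.myProd_evalFrom] at hloop
  have h1 := hA q.1 w hw (congrArg Prod.fst hloop) a ha
  have h2 := hB q.2 w hw (congrArg Prod.snd hloop) a ha
  show (A.step q.1 a, B.step q.2 a) = q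
  rw [h1, h2]

/-- Weakly acyclic languages are closed under complement, union and intersection. -/
theorem weaklyAcyclic_closure {α : Type} [Fintype α]
    (K L : Language α) (hK : K.IsWeaklyAcyclic) (hL : L.IsWeaklyAcyclic) :
    (Lᶜ).IsWeaklyAcyclic ∧ (K ⊔ L).IsWeaklyAcyclic ∧ (K ⊓ L).IsWeaklyAcyclic := by
  obtain ⟨σ₁, _, A, hA, hAacc⟩ := hK
  obtain ⟨σ₂, _, B, hB, hBacc⟩ := hL
  refine ⟨⟨σ₂, ‹_›, ⟨B.step, B.start, B.acceptᶜ⟩, ?_, ?_⟩,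
    ⟨σ₁ × σ₂, inferInstance, A.myProd B {p | p.1 ∈ A.accept ∨ p.2 ∈ B.accept},
      DFA.myProd_weaklyAcyclic hA hB _, ?_⟩,
    ⟨σ₁ × σ₂, inferInstance, A.myProd B {p | p.1 ∈ A.accept ∧ p.2 ∈ B.accept},
      DFA.myProd_weaklyAcyclic hA hB _, ?_⟩⟩
  · exact hB
  · ext x
    rw [← hBacc]
    simp [DFA.mem_accepts, DFA.eval]
    rfl
  · ext x
    rw [← hAacc, ← hBacc]
    simp only [DFA.mem_accepts, DFA.eval, DFA.myProd_evalFrom]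
    rfl
  · ext x
    rw [← hAacc, ← hBacc]
    simp only [DFA.mem_accepts, DFA.eval, DFA.myProd_evalFrom]
    rfl
end

section
/- Let L ⊆ Σ* be a weakly acyclic language and let K ⊆ Σ* be a language such that K = Lᵘ and L = Kᵛ for some words u, v ∈ Σ*. Then K = L. (Hence the relation 'K ≼ L iff K = Lʷ for some word w' is a partial order on weakly acyclic languages.) -/
private lemma evalFrom_eq_self_of_selfloops {α σ : Type*} (A : DFA α σ) (q : σ) (w : List α)
    (h : ∀ a ∈ w, A.step q a = q) : A.evalFrom q w = q := by
  induction w with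
  | nil => simp
  | cons a t ih =>
    have : A.step q a = q := h a (by simp)
    rw [show (a :: t) = [a] ++ t from rfl, DFA.evalFrom_of_append, DFA.evalFrom_singleton, this]
    exact ih fun b hb => h b (by simp [hb])

/-- The residual relation on weakly acyclic languages is antisymmetric:
if `K = Lᵘ` and `L = Kᵛ` then `K = L`. -/
theorem residual_antisymm {α : Type} [Fintype α] (L K : Language α)
    (hL : L.IsWeaklyAcyclic) (u v : List α)
    (hK : K = L.residual u) (hLK : L = K.residual v) : K = L := by
  subst hK
  by_cases hu : u = []
  · subst hu
    ext w; exact Iff.rfl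
  -- key relation: w ∈ L ↔ (u ++ v) ++ w ∈ L
  have key : ∀ w : List α, w ∈ L ↔ (u ++ v) ++ w ∈ L := by
    intro w
    conv_lhs => rw [hLK]
    show u ++ (v ++ w) ∈ L ↔ _
    rw [← List.append_assoc]
  obtain ⟨σ, _, A, hWA, hAcc⟩ := hL
  -- iterated state
  set h : ℕ → σ := fun n => (fun s => A.evalFrom s (u ++ v))^[n] A.start with hh
  have hsucc : ∀ n, h (n + 1) = A.evalFrom (h n) (u ++ v) := by
    intro n; simp [hh, Function.iterate_succ_apply']
  -- fact 1: acceptance from h n is L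
  have fact1 : ∀ n (w : List α), (A.evalFrom (h n) w ∈ A.accept) ↔ w ∈ L := by
    intro n
    induction n with
    | zero => intro w; rw [← hAcc]; rfl
    | succ n ih =>
      intro w
      rw [hsucc, ← DFA.evalFrom_of_append, ih, ← key]
  -- pigeonhole
  obtain ⟨m, n, hmn, heq⟩ := Finite.exists_ne_map_eq_of_infinite h
  wlog hlt : m < n generalizing m n
  · exact this n m hmn.symm heq.symm (by omega)
  -- the looping word
  set k := n - m with hk
  have hk1 : 1 ≤ k := by omega
  set w : List α := (List.replicate k (u ++ v)).flatten with hwdef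
  have hwloop : ∀ j s, A.evalFrom s ((List.replicate j (u ++ v)).flatten) =
      (fun s => A.evalFrom s (u ++ v))^[j] s := by
    intro j
    induction j with
    | zero => intro s; simp
    | succ j ih =>
      intro s
      rw [List.replicate_succ, List.flatten_cons, DFA.evalFrom_of_append, ih,
        ← Function.iterate_succ_apply]
  have huv : u ++ v ≠ [] := fun hnil => hu (List.append_eq_nil_iff.mp hnil).1
  have hloop : A.evalFrom (h m) w = h m := by
    have h2 : A.evalFrom (h m) w = h (k + m) := by
      rw [hwdef, hwloop]
      simp only [hh, ← Function.iterate_add_apply]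
    rw [h2, show k + m = n from by omega, ← heq]
  obtain ⟨j, hj⟩ : ∃ j, k = j + 1 := ⟨k - 1, by omega⟩
  have hwne : w ≠ [] := by
    rw [hwdef, hj, List.replicate_succ, List.flatten_cons]
    intro hc; exact huv (List.append_eq_nil_iff.mp hc).1
  have hselfloops := hWA (h m) w hwne hloop
  -- letters of u are in w
  have humem : ∀ a ∈ u, a ∈ w := by
    intro a ha
    rw [hwdef, hj, List.replicate_succ, List.flatten_cons]
    simp [ha]
  have hu_fix : A.evalFrom (h m) u = h m :=
    evalFrom_eq_self_of_selfloops A (h m) u fun a ha => hselfloops a (humem a ha)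
  ext x
  constructor
  · intro hx
    have : u ++ x ∈ L := hx
    rw [← fact1 m (u ++ x), DFA.evalFrom_of_append, hu_fix, fact1 m x] at this
    exact this
  · intro hx
    show u ++ x ∈ L
    rw [← fact1 m x, ← hu_fix, ← DFA.evalFrom_of_append, fact1 m (u ++ x)] at hx
    exact hx
end

section
/- Let L ⊆ Σ* be a weakly acyclic language. There is no infinite sequence of languages L = L₀, L₁, L₂, … together with words w₁, w₂, … ∈ Σ* such that L_{i+1} = (L_i)^{w_{i+1}} and L_{i+1} ≠ L_i for every i; in other words, the strict residual order on the residuals of L has no infinite descending chain. -/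
private lemma evalFrom_append' {α σ : Type*} (A : DFA α σ) (q : σ) (u v : List α) :
    A.evalFrom q (u ++ v) = A.evalFrom (A.evalFrom q u) v := by
  simp [DFA.evalFrom, List.foldl_append]

private lemma evalFrom_of_selfloops {α σ : Type*} (A : DFA α σ) (q : σ) (u : List α)
    (h : ∀ a ∈ u, A.step q a = q) : A.evalFrom q u = q := by
  induction u with
  | nil => rfl
  | cons a t ih =>
    have : A.step q a = q := h a (by simp)
    simp only [DFA.evalFrom, List.foldl_cons] at *
    rw [this]
    exact ih fun b hb => h b (by simp [hb])

/-- There is no infinite strictly descending chain of iterated residuals of a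
weakly acyclic language. -/
theorem no_infinite_descending_residual_chain {α : Type} [Fintype α] (L : Language α)
    (h : L.IsWeaklyAcyclic) :
    ¬ ∃ (f : ℕ → Language α) (w : ℕ → List α),
        f 0 = L ∧ ∀ i : ℕ, f (i + 1) = (f i).residual (w i) ∧ f (i + 1) ≠ f i := by
  obtain ⟨σ, _, A, hWA, hAcc⟩ := h
  rintro ⟨f, w, hf0, hf⟩
  -- each w i is nonempty
  have hwne : ∀ i, w i ≠ [] := by
    intro i hw
    apply (hf i).2
    rw [(hf i).1, hw]
    ext v
    exact Iff.rfl
  -- states along the run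
  let q : ℕ → σ := fun i => Nat.rec A.start (fun i qi => A.evalFrom qi (w i)) i
  have hq0 : q 0 = A.start := rfl
  have hqsucc : ∀ i, q (i + 1) = A.evalFrom (q i) (w i) := fun i => rfl
  -- f i equals the language accepted from q i
  have hfi : ∀ i, f i = {v | A.evalFrom (q i) v ∈ A.accept} := by
    intro i
    induction i with
    | zero =>
      rw [hf0, ← hAcc]
      rfl
    | succ i ih =>
      rw [(hf i).1, ih, hqsucc]
      ext v
      show A.evalFrom (q i) (w i ++ v) ∈ A.accept ↔
        A.evalFrom (A.evalFrom (q i) (w i)) v ∈ A.accept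
      rw [evalFrom_append']
  -- segments of the run
  have hseg : ∀ i n, ∃ t : List α, A.evalFrom (q i) (w i ++ t) = q (i + n + 1) := by
    intro i n
    induction n with
    | zero => exact ⟨[], by rw [List.append_nil]⟩
    | succ n ih =>
      obtain ⟨t, ht⟩ := ih
      refine ⟨t ++ w (i + n + 1), ?_⟩
      rw [← List.append_assoc, evalFrom_append', ht,
        show i + (n + 1) + 1 = (i + n + 1) + 1 from by ring, hqsucc]
  -- pigeonhole: some state repeats
  obtain ⟨i, j, hij, hq⟩ := Finite.exists_ne_map_eq_of_infinite q
  wlog hlt : i < j generalizing i j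
  · exact this j i hij.symm hq.symm (by omega)
  obtain ⟨t, hev⟩ := hseg i (j - i - 1)
  have hj : i + (j - i - 1) + 1 = j := by omega
  rw [hj, ← hq] at hev
  have hloops : ∀ a ∈ w i ++ t, A.step (q i) a = q i :=
    hWA (q i) (w i ++ t) (by simp [hwne i]) hev
  have hwloop : A.evalFrom (q i) (w i) = q i :=
    evalFrom_of_selfloops A (q i) (w i) fun a ha => hloops a (by simp [ha])
  apply (hf i).2
  rw [hfi (i + 1), hfi i, hqsucc, hwloop]
end

section
/- A language L ⊆ Σ* is weakly acyclic if and only if L belongs to the smallest family C of languages over Σ such that: ∅ ∈ C; Γ* ∈ C for every subset Γ ⊆ Σ; C is closed under binary union; and for every Λ ⊆ Σ, every a ∈ Σ \ Λ, and every M ∈ C, the language Λ*·a·M = {u a v : u ∈ Λ*, v ∈ M} belongs to C. (Equivalently, a language is weakly acyclic iff it is described by a weakly acyclic expression r ::= ∅ | Γ* | Λ* a r | r + r with a ∉ Λ.) -/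
/-- The smallest family of languages containing `∅` and `Γ*` (for every `Γ ⊆ Σ`),
closed under binary union, and closed under `M ↦ Λ*·a·M` for `a ∉ Λ`
(i.e. languages of weakly acyclic expressions). -/
inductive WAExpr {α : Type*} : Language α → Prop
  | empty : WAExpr (⊥ : Language α)
  | star (Γ : Set α) : WAExpr {w | ∀ a ∈ w, a ∈ Γ}
  | cat (Λ : Set α) (a : α) (ha : a ∉ Λ) (M : Language α) (hM : WAExpr M) :
      WAExpr {w | ∃ u v, (∀ b ∈ u, b ∈ Λ) ∧ v ∈ M ∧ w = u ++ a :: v}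
  | union (K L : Language α) : WAExpr K → WAExpr L → WAExpr (K ⊔ L)

/-!
In a weakly acyclic DFA a letter `c` that does not loop on a state `q` leads to a state from
which `q` is unreachable, hence to a state with strictly fewer reachable states. A word read
from `q` either only uses letters looping on `q`, or leaves `q` through a first non-looping
letter `c`; so `L_q = [q accepting] (loops q)* ∪ ⋃_{c ∉ loops q} (loops q)* c L_{δ(q,c)}`, and
recursion on the number of reachable states turns this into a weakly acyclic expression.
Conversely every constructor is realised by a weakly acyclic DFA: products for unions, and for
`Λ*·a·M` a fresh initial state looping on `Λ` in front of an automaton for `M`.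
-/

namespace Language

variable {α : Type*}

def wordsOver (Γ : Set α) : Language α := {w | ∀ a ∈ w, a ∈ Γ}

/-- `Λ*·a·M`. -/
def wordsOverCons (Λ : Set α) (a : α) (M : Language α) : Language α :=
  {w | ∃ u v, u ∈ wordsOver Λ ∧ v ∈ M ∧ w = u ++ a :: v}

theorem mem_wordsOver_cons {Λ : Set α} {b : α} {w : List α} :
    b :: w ∈ wordsOver Λ ↔ b ∈ Λ ∧ w ∈ wordsOver Λ :=
  List.forall_mem_cons

theorem mem_wordsOver_or_exists_append_cons (Λ : Set α) (w : List α) :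
    w ∈ wordsOver Λ ∨ ∃ u c v, u ∈ wordsOver Λ ∧ c ∉ Λ ∧ w = u ++ c :: v := by
  induction w with
  | nil => exact Or.inl nofun
  | cons b w ih =>
    by_cases hb : b ∈ Λ
    · refine ih.imp (fun hw => mem_wordsOver_cons.2 ⟨hb, hw⟩) ?_
      rintro ⟨u, c, v, hu, hc, rfl⟩
      exact ⟨b :: u, c, v, mem_wordsOver_cons.2 ⟨hb, hu⟩, hc, rfl⟩
    · exact Or.inr ⟨[], b, w, nofun, hb, rfl⟩

theorem wordsOverCons_bot (Λ : Set α) (a : α) : wordsOverCons Λ a ⊥ = ⊥ :=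
  Set.ext fun _ => iff_of_false (fun ⟨_, _, _, hv, _⟩ => hv) id

end Language

open Language

namespace WAExpr

variable {α : Type*}

theorem finset_sup {ι : Type*} (s : Finset ι) {f : ι → Language α}
    (hf : ∀ i ∈ s, WAExpr (f i)) : WAExpr (s.sup f) := by
  induction s using Finset.cons_induction with
  | empty => exact .empty
  | cons i s hi ih =>
    rw [Finset.sup_cons]
    exact .union _ _ (hf i (s.mem_cons_self i)) (ih fun j hj => hf j (Finset.mem_cons_of_mem hj))

theorem iSup {ι : Type*} [Finite ι] {f : ι → Language α} (hf : ∀ i, WAExpr (f i)) :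
    WAExpr (⨆ i, f i) := by
  cases nonempty_fintype ι
  rw [← Finset.sup_univ_eq_iSup]
  exact finset_sup _ fun i _ => hf i

theorem setOf_and_mem {K : Language α} (hK : WAExpr K) (p : Prop) :
    WAExpr {w | p ∧ w ∈ K} := by
  by_cases hp : p
  · rwa [show ({w | p ∧ w ∈ K} : Language α) = K from Set.ext fun _ => and_iff_right hp]
  · rw [show ({w | p ∧ w ∈ K} : Language α) = ⊥ from Set.ext fun _ => iff_of_false (hp ·.1) id]
    exact .empty

end WAExpr

namespace DFA

variable {α σ : Type*} (A : DFA α σ)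

def loopLetters (q : σ) : Set α := {a | A.step q a = q}

theorem evalFrom_of_mem_wordsOver_loopLetters {q : σ} {u : List α}
    (hu : u ∈ wordsOver (A.loopLetters q)) : A.evalFrom q u = q := by
  induction u with
  | nil => rfl
  | cons b u ih =>
    obtain ⟨hb, hu⟩ := mem_wordsOver_cons.1 hu
    rw [evalFrom_cons, hb, ih hu]

theorem evalFrom_append_cons_of_mem_wordsOver_loopLetters {q : σ} {u : List α} (c : α)
    (v : List α) (hu : u ∈ wordsOver (A.loopLetters q)) :
    A.evalFrom q (u ++ c :: v) = A.evalFrom (A.step q c) v := by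
  rw [evalFrom_of_append, A.evalFrom_of_mem_wordsOver_loopLetters hu, evalFrom_cons]

theorem mem_acceptsFrom_iff_loopLetters {q : σ} {w : List α} :
    w ∈ A.acceptsFrom q ↔ (q ∈ A.accept ∧ w ∈ wordsOver (A.loopLetters q)) ∨
      ∃ c ∉ A.loopLetters q,
        w ∈ wordsOverCons (A.loopLetters q) c (A.acceptsFrom (A.step q c)) := by
  constructor
  · intro hw
    rcases mem_wordsOver_or_exists_append_cons (A.loopLetters q) w with
      hloop | ⟨u, c, v, hu, hc, rfl⟩
    · refine Or.inl ⟨?_, hloop⟩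
      rwa [mem_acceptsFrom, A.evalFrom_of_mem_wordsOver_loopLetters hloop] at hw
    · refine Or.inr ⟨c, hc, u, v, hu, ?_, rfl⟩
      rwa [mem_acceptsFrom, A.evalFrom_append_cons_of_mem_wordsOver_loopLetters c v hu] at hw
  · rintro (⟨hq, hloop⟩ | ⟨c, -, u, v, hu, hv, rfl⟩)
    · rwa [mem_acceptsFrom, A.evalFrom_of_mem_wordsOver_loopLetters hloop]
    · rwa [mem_acceptsFrom, A.evalFrom_append_cons_of_mem_wordsOver_loopLetters c v hu]

theorem acceptsFrom_eq_sup_iSup (q : σ) :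
    A.acceptsFrom q = ({w | q ∈ A.accept ∧ w ∈ wordsOver (A.loopLetters q)} : Language α) ⊔
      ⨆ c : {c // c ∉ A.loopLetters q},
        wordsOverCons (A.loopLetters q) c (A.acceptsFrom (A.step q c)) := by
  ext w
  rw [mem_acceptsFrom_iff_loopLetters]
  refine or_congr Iff.rfl (Iff.trans ?_ Language.mem_iSup.symm)
  simp only [Subtype.exists, exists_prop]

end DFA

namespace DFA.WeaklyAcyclic

variable {α σ : Type*} {A : DFA α σ}

theorem ncard_range_evalFrom_step_lt [Finite σ] (hA : A.WeaklyAcyclic) {q : σ} {c : α}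
    (hc : c ∉ A.loopLetters q) :
    (Set.range (A.evalFrom (A.step q c))).ncard < (Set.range (A.evalFrom q)).ncard := by
  refine Set.ncard_lt_ncard ⟨?_, fun hsub => ?_⟩ (Set.toFinite _)
  · rintro _ ⟨w, rfl⟩
    exact ⟨c :: w, rfl⟩
  · obtain ⟨w, hw⟩ := hsub ⟨[], rfl⟩
    exact hc (hA q (c :: w) (List.cons_ne_nil c w) hw c List.mem_cons_self)

theorem waExpr_acceptsFrom [Finite α] [Finite σ] (hA : A.WeaklyAcyclic) (q : σ) :
    WAExpr (A.acceptsFrom q) := by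
  rw [A.acceptsFrom_eq_sup_iSup]
  exact .union _ _ (.setOf_and_mem (.star _) _) <| .iSup fun c =>
    .cat _ _ c.2 _ (hA.waExpr_acceptsFrom (A.step q c))
termination_by (Set.range (A.evalFrom q)).ncard
decreasing_by exact hA.ncard_range_evalFrom_step_lt c.2

end DFA.WeaklyAcyclic

namespace DFA

variable {α σ : Type*}

def rejectAll : DFA α Unit := ⟨fun _ _ => (), (), ∅⟩

theorem weaklyAcyclic_rejectAll : (rejectAll : DFA α Unit).WeaklyAcyclic :=
  fun _ _ _ _ _ _ => rfl

open scoped Classical in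
noncomputable def prependLoop (A : DFA α σ) (Λ : Set α) (next : α → σ) (acc : Prop) :
    DFA α (Option σ) where
  step s c := s.elim (if c ∈ Λ then none else some (next c)) fun q => some (A.step q c)
  start := none
  accept := {s | s.elim acc (· ∈ A.accept)}

variable (A : DFA α σ) (Λ : Set α) (next : α → σ) (acc : Prop)

theorem prependLoop_evalFrom_some (q : σ) (w : List α) :
    (A.prependLoop Λ next acc).evalFrom (some q) w = some (A.evalFrom q w) := by
  induction w generalizing q with
  | nil => rfl
  | cons c w ih => exact ih (A.step q c)

theorem prependLoop_acceptsFrom_some (q : σ) :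
    (A.prependLoop Λ next acc).acceptsFrom (some q) = A.acceptsFrom q := by
  ext w
  simp only [mem_acceptsFrom, prependLoop_evalFrom_some]
  rfl

theorem prependLoop_step_none_of_notMem {c : α} (hc : c ∉ Λ) :
    (A.prependLoop Λ next acc).step none c = some (next c) := by
  simp [prependLoop, hc]

theorem loopLetters_prependLoop_none : (A.prependLoop Λ next acc).loopLetters none = Λ := by
  ext c
  by_cases hc : c ∈ Λ
  · simp [loopLetters, prependLoop, hc]
  · simp [loopLetters, prependLoop_step_none_of_notMem A Λ next acc hc, hc]

theorem mem_prependLoop_accepts {w : List α} :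
    w ∈ (A.prependLoop Λ next acc).accepts ↔
      (acc ∧ w ∈ wordsOver Λ) ∨ ∃ c ∉ Λ, w ∈ wordsOverCons Λ c (A.acceptsFrom (next c)) := by
  change w ∈ (A.prependLoop Λ next acc).acceptsFrom none ↔ _
  rw [mem_acceptsFrom_iff_loopLetters, loopLetters_prependLoop_none]
  refine or_congr Iff.rfl (exists_congr fun c => and_congr_right fun hc => ?_)
  rw [prependLoop_step_none_of_notMem A Λ next acc hc, prependLoop_acceptsFrom_some]

theorem mem_wordsOver_of_prependLoop_evalFrom_none {w : List α}
    (hw : (A.prependLoop Λ next acc).evalFrom none w = none) : w ∈ wordsOver Λ := by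
  refine (mem_wordsOver_or_exists_append_cons Λ w).resolve_right ?_
  rintro ⟨u, c, v, hu, hc, rfl⟩
  rw [← loopLetters_prependLoop_none A Λ next acc] at hu
  rw [evalFrom_append_cons_of_mem_wordsOver_loopLetters _ c v hu,
    prependLoop_step_none_of_notMem A Λ next acc hc, prependLoop_evalFrom_some] at hw
  exact Option.some_ne_none _ hw

theorem WeaklyAcyclic.prependLoop {A : DFA α σ} (hA : A.WeaklyAcyclic) :
    (A.prependLoop Λ next acc).WeaklyAcyclic := by
  rintro (_ | q) w hw hloop c hcw
  · show c ∈ (A.prependLoop Λ next acc).loopLetters none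
    rw [loopLetters_prependLoop_none]
    exact mem_wordsOver_of_prependLoop_evalFrom_none A Λ next acc hloop c hcw
  · rw [prependLoop_evalFrom_some, Option.some_inj] at hloop
    exact congrArg some (hA q w hw hloop c hcw)

theorem union_evalFrom.{u} {σ₁ σ₂ : Type u} (A : DFA α σ₁) (B : DFA α σ₂) (s : σ₁ × σ₂)
    (w : List α) : (A.union B).evalFrom s w = (A.evalFrom s.1 w, B.evalFrom s.2 w) := by
  induction w generalizing s with
  | nil => rfl
  | cons c w ih => exact ih _

theorem WeaklyAcyclic.union.{u} {σ₁ σ₂ : Type u} {A : DFA α σ₁} {B : DFA α σ₂}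
    (hA : A.WeaklyAcyclic) (hB : B.WeaklyAcyclic) : (A.union B).WeaklyAcyclic := by
  intro s w hw hloop c hc
  rw [union_evalFrom, Prod.ext_iff] at hloop
  exact Prod.ext (hA _ w hw hloop.1 c hc) (hB _ w hw hloop.2 c hc)

end DFA

theorem DFA.WeaklyAcyclic.isWeaklyAcyclic_accepts {α σ : Type} [Finite σ] {A : DFA α σ}
    (hA : A.WeaklyAcyclic) : A.accepts.IsWeaklyAcyclic :=
  ⟨σ, Fintype.ofFinite σ, A, hA, rfl⟩

namespace Language

variable {α : Type}

theorem isWeaklyAcyclic_bot : (⊥ : Language α).IsWeaklyAcyclic :=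
  DFA.weaklyAcyclic_rejectAll.isWeaklyAcyclic_accepts

theorem isWeaklyAcyclic_wordsOver (Γ : Set α) : (wordsOver Γ).IsWeaklyAcyclic := by
  convert (DFA.weaklyAcyclic_rejectAll.prependLoop Γ (fun _ => ()) True).isWeaklyAcyclic_accepts
  ext w
  rw [DFA.mem_prependLoop_accepts, true_and]
  exact (or_iff_left fun ⟨_, _, _, _, _, hv, _⟩ => hv).symm

theorem IsWeaklyAcyclic.sup {K L : Language α} (hK : K.IsWeaklyAcyclic)
    (hL : L.IsWeaklyAcyclic) : (K ⊔ L).IsWeaklyAcyclic := by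
  obtain ⟨σ, _, A, hA, rfl⟩ := hK
  obtain ⟨τ, _, B, hB, rfl⟩ := hL
  exact ⟨σ × τ, inferInstance, A.union B, hA.union hB, DFA.accepts_union A B⟩

theorem IsWeaklyAcyclic.wordsOverCons {Λ : Set α} {a : α} (ha : a ∉ Λ) {M : Language α}
    (hM : M.IsWeaklyAcyclic) : (wordsOverCons Λ a M).IsWeaklyAcyclic := by
  classical
  obtain ⟨σ, _, A, hA, rfl⟩ := hM
  -- the state `none` of `D` is a dead state
  let D := A.prependLoop Set.univ (fun _ => A.start) False
  have hdead : D.acceptsFrom none = ⊥ := Set.ext fun w => by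
    change w ∈ D.accepts ↔ False
    simp [D, DFA.mem_prependLoop_accepts]
  convert ((hA.prependLoop Set.univ (fun _ => A.start) False).prependLoop Λ
    (fun c => if c = a then some A.start else none) False).isWeaklyAcyclic_accepts
  ext w
  rw [DFA.mem_prependLoop_accepts]
  constructor
  · exact fun hw => Or.inr ⟨a, ha, by rwa [if_pos rfl, DFA.prependLoop_acceptsFrom_some]⟩
  · rintro (⟨⟨⟩, -⟩ | ⟨c, -, hw⟩)
    split_ifs at hw with hc
    · rwa [hc, DFA.prependLoop_acceptsFrom_some] at hw
    · rw [hdead, wordsOverCons_bot] at hw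
      exact hw.elim

end Language

theorem WAExpr.isWeaklyAcyclic {α : Type} {L : Language α} (hL : WAExpr L) :
    L.IsWeaklyAcyclic := by
  induction hL with
  | empty => exact isWeaklyAcyclic_bot
  | star Γ => exact isWeaklyAcyclic_wordsOver Γ
  | cat Λ a ha M _ ih => exact ih.wordsOverCons ha
  | union K L _ _ ihK ihL => exact ihK.sup ihL

/-- A language is weakly acyclic iff it is described by a weakly acyclic expression. -/
theorem weaklyAcyclic_iff_expr {α : Type} [Fintype α] (L : Language α) :
    L.IsWeaklyAcyclic ↔ WAExpr L := by
  constructor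
  · rintro ⟨σ, _, A, hA, rfl⟩
    exact hA.waExpr_acceptsFrom A.start
  · exact WAExpr.isWeaklyAcyclic
end

section
/- Let M ⊆ Σ* be a weakly acyclic language, let Λ ⊆ Σ, and let a ∈ Σ \ Λ. Then the language Λ*·a·M = {u a v : u ∈ Λ*, v ∈ M} is weakly acyclic. -/
open Classical in
noncomputable def auxDFA {α σ : Type} (A : DFA α σ) (Λ : Set α) (a : α) :
    DFA α (σ ⊕ Bool) where
  step q b := match q with
    | Sum.inl s => Sum.inl (A.step s b)
    | Sum.inr true => Sum.inr true
    | Sum.inr false =>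
        if b = a then Sum.inl A.start
        else if b ∈ Λ then Sum.inr false else Sum.inr true
  start := Sum.inr false
  accept := Sum.inl '' A.accept

lemma evalFrom_cons' {α σ : Type} (A : DFA α σ) (s : σ) (b : α) (t : List α) :
    A.evalFrom s (b :: t) = A.evalFrom (A.step s b) t := rfl

lemma aux_evalFrom_inl {α σ : Type} (A : DFA α σ) (Λ : Set α) (a : α)
    (q : σ) (w : List α) :
    (auxDFA A Λ a).evalFrom (Sum.inl q) w = Sum.inl (A.evalFrom q w) := by
  induction w generalizing q with
  | nil => rfl
  | cons b t ih => simpa [DFA.evalFrom, auxDFA] using ih (A.step q b)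

lemma aux_evalFrom_dead {α σ : Type} (A : DFA α σ) (Λ : Set α) (a : α)
    (w : List α) :
    (auxDFA A Λ a).evalFrom (Sum.inr true) w = Sum.inr true := by
  induction w with
  | nil => rfl
  | cons b t ih => simpa [DFA.evalFrom, auxDFA] using ih

lemma aux_evalFrom_wait {α σ : Type} (A : DFA α σ) (Λ : Set α) (a : α)
    (ha : a ∉ Λ) (u : List α) (hu : ∀ b ∈ u, b ∈ Λ) :
    (auxDFA A Λ a).evalFrom (Sum.inr false) u = Sum.inr false := by
  induction u with
  | nil => rfl
  | cons b t ih =>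
    have hb : b ∈ Λ := hu b (by simp)
    have hba : b ≠ a := fun h => ha (h ▸ hb)
    have : (auxDFA A Λ a).step (Sum.inr false) b = Sum.inr false := by
      simp [auxDFA, hb, hba]
    rw [evalFrom_cons', this]
    exact ih (fun c hc => hu c (by simp [hc]))

lemma aux_reach {α σ : Type} (A : DFA α σ) (Λ : Set α) (a : α)
    (w : List α) (s : σ)
    (h : (auxDFA A Λ a).evalFrom (Sum.inr false) w = Sum.inl s) :
    ∃ u v, (∀ b ∈ u, b ∈ Λ) ∧ w = u ++ a :: v ∧ s = A.evalFrom A.start v := by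
  induction w with
  | nil => simp [DFA.evalFrom] at h
  | cons b t ih =>
    rw [evalFrom_cons'] at h
    by_cases hba : b = a
    · have hs : (auxDFA A Λ a).step (Sum.inr false) b = Sum.inl A.start := by
        simp [auxDFA, hba]
      rw [hs, aux_evalFrom_inl] at h
      exact ⟨[], t, by simp, by simp [hba], by simpa using h.symm⟩
    · by_cases hb : b ∈ Λ
      · have hs : (auxDFA A Λ a).step (Sum.inr false) b = Sum.inr false := by
          simp [auxDFA, hb, hba]
        rw [hs] at h
        obtain ⟨u, v, hu, ht, hv⟩ := ih h
        refine ⟨b :: u, v, ?_, by simp [ht], hv⟩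
        intro c hc
        rcases List.mem_cons.mp hc with rfl | hc'
        · exact hb
        · exact hu c hc'
      · have hs : (auxDFA A Λ a).step (Sum.inr false) b = Sum.inr true := by
          simp [auxDFA, hb, hba]
        rw [hs, aux_evalFrom_dead] at h
        exact absurd h (by simp)

lemma aux_loop_wait {α σ : Type} (A : DFA α σ) (Λ : Set α) (a : α)
    (ha : a ∉ Λ) (w : List α)
    (h : (auxDFA A Λ a).evalFrom (Sum.inr false) w = Sum.inr false) :
    ∀ b ∈ w, b ∈ Λ := by
  induction w with
  | nil => simp
  | cons b t ih =>
    rw [evalFrom_cons'] at h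
    by_cases hba : b = a
    · rw [show (auxDFA A Λ a).step (Sum.inr false) b = Sum.inl A.start by
        simp [auxDFA, hba], aux_evalFrom_inl] at h
      exact absurd h (by simp)
    · by_cases hb : b ∈ Λ
      · rw [show (auxDFA A Λ a).step (Sum.inr false) b = Sum.inr false by
          simp [auxDFA, hb, hba]] at h
        intro c hc
        rcases List.mem_cons.mp hc with rfl | hc'
        · exact hb
        · exact ih h c hc'
      · rw [show (auxDFA A Λ a).step (Sum.inr false) b = Sum.inr true by
          simp [auxDFA, hb, hba], aux_evalFrom_dead] at h
        exact absurd h (by simp)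

/-- If `M` is weakly acyclic and `a ∉ Λ`, then `Λ*·a·M` is weakly acyclic. -/
theorem star_cat_weaklyAcyclic {α : Type} [Fintype α] (M : Language α)
    (hM : M.IsWeaklyAcyclic) (Λ : Set α) (a : α) (ha : a ∉ Λ) :
    Language.IsWeaklyAcyclic
      {w : List α | ∃ u v, (∀ b ∈ u, b ∈ Λ) ∧ v ∈ M ∧ w = u ++ a :: v} := by
  obtain ⟨σ, hσ, A, hWA, hAcc⟩ := hM
  refine ⟨σ ⊕ Bool, inferInstance, auxDFA A Λ a, ?_, ?_⟩
  · rintro (q | b) w hw hloop c hc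
    · rw [aux_evalFrom_inl] at hloop
      have := hWA q w hw (by exact Sum.inl.inj hloop) c hc
      simp [auxDFA, this]
    · cases b with
      | true => rfl
      | false =>
        have hc' : c ∈ Λ := aux_loop_wait A Λ a ha w hloop c hc
        have hca : c ≠ a := fun h => ha (h ▸ hc')
        simp [auxDFA, hc', hca]
  · ext w
    rw [DFA.mem_accepts]
    constructor
    · intro hw
      obtain ⟨s, hs, hsw⟩ := hw
      obtain ⟨u, v, hu, hwe, hv⟩ := aux_reach A Λ a w s hsw.symm
      refine ⟨u, v, hu, ?_, hwe⟩
      rw [← hAcc, DFA.mem_accepts]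
      show A.evalFrom A.start v ∈ A.accept
      exact hv ▸ hs
    · rintro ⟨u, v, hu, hv, rfl⟩
      rw [← hAcc, DFA.mem_accepts] at hv
      refine ⟨A.evalFrom A.start v, hv, ?_⟩
      symm
      show (auxDFA A Λ a).evalFrom (Sum.inr false) (u ++ a :: v) =
        Sum.inl (A.evalFrom A.start v)
      rw [DFA.evalFrom_of_append, aux_evalFrom_wait A Λ a ha u hu, evalFrom_cons',
        show (auxDFA A Λ a).step (Sum.inr false) a = Sum.inl A.start by simp [auxDFA],
        aux_evalFrom_inl]
end

section
/- Let K ⊆ (Σ × Σ)* and L ⊆ Σ* be weakly acyclic languages over a finite alphabet Σ that are pre-compatible. Then Pre(K, L) is a weakly acyclic language. -/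
/-- `Pre K L` is the set of words `u` such that `zip(u, v) ∈ K` and `v ∈ L`
for some word `v` of the same length as `u`. -/
def Pre {α : Type*} (K : Language (α × α)) (L : Language α) : Language α :=
  {u | ∃ v : List α, v.length = u.length ∧ u.zip v ∈ K ∧ v ∈ L}

/-- `K` and `L` are pre-compatible if for all words `u, v` of equal length and
every letter `a`, there is at most one letter `b` such that
`K^{zip(u,v)·(a,b)} ≠ ∅` and `L^{v·b} ≠ ∅`. -/
def PreCompatible {α : Type*} (K : Language (α × α)) (L : Language α) : Prop :=
  ∀ (u v : List α), v.length = u.length → ∀ (a b₁ b₂ : α),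
    K.residual (u.zip v ++ [(a, b₁)]) ≠ ⊥ → L.residual (v ++ [b₁]) ≠ ⊥ →
    K.residual (u.zip v ++ [(a, b₂)]) ≠ ⊥ → L.residual (v ++ [b₂]) ≠ ⊥ →
    b₁ = b₂

/-!
Run `A` (for `K`) and `B` (for `L`) in parallel, guessing the second track letter by letter: in
state `(p, q)` on input `a`, pick some `b` after which `A` (reading `(a, b)`) and `B` (reading `b`)
can both still accept. Pre-compatibility makes this `b` unique at every reachable state, so the
run follows the witness `v` of any `u ∈ Pre(K, L)`. Weak acyclicity holds for any choice of `b`: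
each step of the guessing automaton is a step of the synchronous product of `A` and `B` under a
state-dependent relabelling, and a loop of the former is traced by a loop of the latter, all of
whose letters self-loop the state.
-/

universe u

theorem Language.residual_ne_bot_of_mem {α : Type*} {L : Language α} {x : List α} (h : x ∈ L) :
    L.residual x ≠ ⊥ :=
  Set.nonempty_iff_ne_empty.1 ⟨[], by simpa [Language.residual] using h⟩

theorem Language.residual_ne_bot_of_append {α : Type*} {L : Language α} {x y : List α}
    (h : L.residual (x ++ y) ≠ ⊥) : L.residual x ≠ ⊥ := by
  obtain ⟨w, hw⟩ := Set.nonempty_iff_ne_empty.2 h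
  refine Set.nonempty_iff_ne_empty.1 ⟨y ++ w, ?_⟩
  simpa [Language.residual] using hw

namespace DFA

variable {α β σ : Type*}

theorem residual_accepts (M : DFA α σ) (x : List α) :
    M.accepts.residual x = M.acceptsFrom (M.eval x) :=
  Language.leftQuotient_accepts_apply M x

theorem WeaklyAcyclic.comap {M : DFA β σ} (hM : M.WeaklyAcyclic) (f : α → β) :
    (M.comap f).WeaklyAcyclic := by
  intro s w hw hloop a ha
  rw [evalFrom_comap] at hloop
  exact hM s (w.map f) (by simpa using hw) hloop (f a) (List.mem_map_of_mem ha)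

theorem evalFrom_inter {σ₁ σ₂ : Type u} (M₁ : DFA α σ₁) (M₂ : DFA α σ₂) (s : σ₁ × σ₂)
    (w : List α) : (M₁.inter M₂).evalFrom s w = (M₁.evalFrom s.1 w, M₂.evalFrom s.2 w) := by
  induction w generalizing s with
  | nil => rfl
  | cons a w ih => exact ih _

theorem WeaklyAcyclic.inter {σ₁ σ₂ : Type u} {M₁ : DFA α σ₁} {M₂ : DFA α σ₂}
    (h₁ : M₁.WeaklyAcyclic) (h₂ : M₂.WeaklyAcyclic) : (M₁.inter M₂).WeaklyAcyclic := by
  intro s w hw hloop a ha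
  rw [evalFrom_inter, Prod.ext_iff] at hloop
  exact Prod.ext (h₁ s.1 w hw hloop.1 a ha) (h₂ s.2 w hw hloop.2 a ha)

section relabel

variable (C : DFA α σ) (f : σ → α → β)

/-- The word read along the run of `C` on `w` from `s` when the letter `a` read in state `s`
is renamed `f s a`. -/
def relabelRun : σ → List α → List β
  | _, [] => []
  | s, a :: w => f s a :: relabelRun (C.step s a) w

variable {C f} {A : DFA β σ}

theorem evalFrom_relabelRun (h : ∀ s a, C.step s a = A.step s (f s a)) (s : σ) (w : List α) :
    A.evalFrom s (C.relabelRun f s w) = C.evalFrom s w := by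
  induction w generalizing s with
  | nil => rfl
  | cons a w ih => rw [relabelRun, evalFrom_cons, evalFrom_cons, ← h, ih]

theorem step_eq_of_forall_mem_relabelRun (h : ∀ s a, C.step s a = A.step s (f s a)) {s : σ}
    {w : List α} (hs : ∀ b ∈ C.relabelRun f s w, A.step s b = s) : ∀ a ∈ w, C.step s a = s := by
  induction w with
  | nil => simp
  | cons a w ih =>
    have hstep : C.step s a = s := (h s a).trans (hs _ List.mem_cons_self)
    rw [relabelRun, hstep] at hs
    exact List.forall_mem_cons.2 ⟨hstep, ih fun b hb => hs b (List.mem_cons_of_mem _ hb)⟩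

theorem WeaklyAcyclic.of_step_eq (hA : A.WeaklyAcyclic)
    (h : ∀ s a, C.step s a = A.step s (f s a)) : C.WeaklyAcyclic := by
  intro s w hw hloop
  refine step_eq_of_forall_mem_relabelRun h (hA s _ ?_ ?_)
  · cases w with
    | nil => exact absurd rfl hw
    | cons a w => exact List.cons_ne_nil _ _
  · rw [evalFrom_relabelRun h, hloop]

end relabel

section pre

variable {σ τ : Type u} (A : DFA (α × α) σ) (B : DFA α τ)

/-- A letter `b` after which `A` (reading `(a, b)`) and `B` (reading `b`) can both still accept,
if there is one; an arbitrary letter otherwise. -/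
noncomputable def preChoice (s : σ × τ) (a : α) : α :=
  @Classical.epsilon α ⟨a⟩ fun b =>
    A.acceptsFrom (A.step s.1 (a, b)) ≠ ⊥ ∧ B.acceptsFrom (B.step s.2 b) ≠ ⊥

noncomputable def pre : DFA α (σ × τ) where
  step s a := (A.step s.1 (a, preChoice A B s a), B.step s.2 (preChoice A B s a))
  start := (A.start, B.start)
  accept := A.accept ×ˢ B.accept

theorem WeaklyAcyclic.pre {A : DFA (α × α) σ} {B : DFA α τ} (hA : A.WeaklyAcyclic)
    (hB : B.WeaklyAcyclic) : (A.pre B).WeaklyAcyclic :=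
  ((hA.comap Prod.fst).inter (hB.comap Prod.snd)).of_step_eq
    (f := fun s a => ((a, preChoice A B s a), preChoice A B s a)) fun _ _ => rfl

theorem exists_evalFrom_pre (s : σ × τ) (w : List α) : ∃ v : List α, v.length = w.length ∧
    (A.pre B).evalFrom s w = (A.evalFrom s.1 (w.zip v), B.evalFrom s.2 v) := by
  induction w generalizing s with
  | nil => exact ⟨[], rfl, rfl⟩
  | cons a w ih =>
    obtain ⟨v, hv, heval⟩ := ih ((A.pre B).step s a)
    exact ⟨preChoice A B s a :: v, by simp [hv], heval⟩

theorem accepts_pre_le : (A.pre B).accepts ≤ Pre A.accepts B.accepts := by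
  intro u (hu : u ∈ (A.pre B).accepts)
  obtain ⟨v, hv, heval⟩ := exists_evalFrom_pre A B (A.pre B).start u
  rw [mem_accepts, eval, heval] at hu
  exact ⟨v, hv, hu.1, hu.2⟩

variable {A B}

theorem preChoice_spec {s : σ × τ} {a : α}
    (h : ∃ b, A.acceptsFrom (A.step s.1 (a, b)) ≠ ⊥ ∧ B.acceptsFrom (B.step s.2 b) ≠ ⊥) :
    A.acceptsFrom (A.step s.1 (a, preChoice A B s a)) ≠ ⊥ ∧
      B.acceptsFrom (B.step s.2 (preChoice A B s a)) ≠ ⊥ :=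
  Classical.epsilon_spec h

theorem preChoice_eq (hcomp : PreCompatible A.accepts B.accepts) {u v : List α}
    (huv : v.length = u.length) {a b : α} (hA : A.accepts.residual (u.zip v ++ [(a, b)]) ≠ ⊥)
    (hB : B.accepts.residual (v ++ [b]) ≠ ⊥) :
    preChoice A B (A.eval (u.zip v), B.eval v) a = b := by
  simp only [residual_accepts, eval_append_singleton] at hA hB ⊢
  have hspec := preChoice_spec (s := (A.eval (u.zip v), B.eval v)) ⟨b, hA, hB⟩
  refine hcomp u v huv a _ b ?_ ?_ ?_ ?_ <;> simp only [residual_accepts, eval_append_singleton]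
  exacts [hspec.1, hspec.2, hA, hB]

theorem eval_pre (hcomp : PreCompatible A.accepts B.accepts) {u v : List α}
    (huv : v.length = u.length) (hA : A.accepts.residual (u.zip v) ≠ ⊥)
    (hB : B.accepts.residual v ≠ ⊥) : (A.pre B).eval u = (A.eval (u.zip v), B.eval v) := by
  induction u using List.reverseRecOn generalizing v with
  | nil => rw [List.length_eq_zero_iff.1 huv]; rfl
  | append_singleton u a ih =>
    obtain ⟨v, b, rfl⟩ : ∃ v' b, v = v' ++ [b] :=
      (List.eq_nil_or_concat' v).resolve_left (by rintro rfl; simp at huv)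
    have huv' : v.length = u.length := by simpa using huv
    rw [List.zip_append (by simpa using huv'.symm)] at hA
    rw [eval_append_singleton, ih huv' (Language.residual_ne_bot_of_append hA)
      (Language.residual_ne_bot_of_append hB)]
    simp only [pre, preChoice_eq hcomp huv' hA hB, List.zip_append huv'.symm,
      List.zip_cons_cons, List.zip_nil_left, eval_append_singleton]

theorem accepts_pre (hcomp : PreCompatible A.accepts B.accepts) :
    (A.pre B).accepts = Pre A.accepts B.accepts := by
  refine (accepts_pre_le A B).antisymm fun u ⟨v, huv, hA, hB⟩ => show u ∈ (A.pre B).accepts from ?_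
  rw [mem_accepts, eval_pre hcomp huv (Language.residual_ne_bot_of_mem hA)
    (Language.residual_ne_bot_of_mem hB)]
  exact ⟨hA, hB⟩

end pre

end DFA

theorem pre_weaklyAcyclic_general {α : Type}
    (K : Language (α × α)) (L : Language α)
    (hK : K.IsWeaklyAcyclic) (hL : L.IsWeaklyAcyclic)
    (hcomp : PreCompatible K L) : (Pre K L).IsWeaklyAcyclic := by
  obtain ⟨σ, _, A, hA, rfl⟩ := hK
  obtain ⟨τ, _, B, hB, rfl⟩ := hL
  exact ⟨σ × τ, inferInstance, A.pre B, hA.pre hB, DFA.accepts_pre hcomp⟩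

/-- If `K` and `L` are weakly acyclic and pre-compatible, then `Pre(K, L)` is
weakly acyclic. -/
theorem pre_weaklyAcyclic {α : Type} [Fintype α]
    (K : Language (α × α)) (L : Language α)
    (hK : K.IsWeaklyAcyclic) (hL : L.IsWeaklyAcyclic)
    (hcomp : PreCompatible K L) : (Pre K L).IsWeaklyAcyclic :=
  pre_weaklyAcyclic_general K L hK hL hcomp
end

section
/- Let Γ be a finite alphabet and let w ∈ Γ* be a word. The upward closure of w under the subword order, i.e., the language {u ∈ Γ* : w ⊑ u} of all words containing w as a scattered subword, is a weakly acyclic language. -/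
/-!
The automaton reading a word `u` keeps a pointer `i` into `w`, advancing it when the next letter
of `u` is `w[i]`; it accepts once the pointer reaches the end of `w`. Greedy matching is complete
for the subword order, so this automaton recognises the upward closure of `w`. Its states only
ever move forward, and an automaton whose transitions are monotone for a partial order on the
states is weakly acyclic: along a loop every state is squeezed between `q` and `q`.
-/

namespace DFA

variable {α σ : Type*} (M : DFA α σ)

theorem le_evalFrom_of_le_step [Preorder σ] (h : ∀ q a, q ≤ M.step q a) (q : σ) (x : List α) :
    q ≤ M.evalFrom q x := by
  induction x generalizing q with
  | nil => exact le_rfl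
  | cons a x ih => exact (h q a).trans (ih _)

theorem weaklyAcyclic_of_le_step [PartialOrder σ] (h : ∀ q a, q ≤ M.step q a) :
    M.WeaklyAcyclic := by
  intro q x _ hloop a ha
  obtain ⟨s, t, rfl⟩ := List.mem_iff_append.1 ha
  rw [evalFrom_of_append, evalFrom_cons] at hloop
  set p := M.evalFrom q s
  have hstep_le : M.step p a ≤ q := hloop ▸ M.le_evalFrom_of_le_step h _ t
  have hp : p = q :=
    le_antisymm ((h p a).trans hstep_le) (M.le_evalFrom_of_le_step h q s)
  rw [← hp] at hstep_le ⊢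
  exact le_antisymm hstep_le (h p a)

end DFA

theorem List.drop_sublist_cons_iff {α : Type*} [DecidableEq α] {w u : List α} {n : ℕ} {a : α} :
    (w.drop n).Sublist (a :: u) ↔
      (w.drop (if w[n]? = some a then n + 1 else n)).Sublist u := by
  split_ifs with hmatch
  · rw [List.drop_eq_getElem_cons (List.getElem?_eq_some_iff.1 hmatch).1,
      (List.getElem?_eq_some_iff.1 hmatch).2, List.cons_sublist_cons]
  · have hhead : (w.drop n).head? = w[n]? := List.head?_drop
    cases hd : w.drop n with
    | nil => simp
    | cons b r =>
      rw [hd, List.head?_cons] at hhead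
      have hba : b ≠ a := fun hba => hmatch (hba ▸ hhead.symm)
      simp [List.sublist_cons_iff, hba]

section SubwordDFA

variable {α : Type*} [DecidableEq α] (w : List α)

def subwordDFA : DFA α (Fin (w.length + 1)) where
  step q a :=
    if h : w[q.val]? = some a then
      ⟨q + 1, Nat.succ_lt_succ (List.getElem?_eq_some_iff.1 h).1⟩
    else q
  start := 0
  accept := {Fin.last _}

theorem subwordDFA_step_val (q : Fin (w.length + 1)) (a : α) :
    ((subwordDFA w).step q a).val = if w[q.val]? = some a then q.val + 1 else q.val := by
  simp only [subwordDFA]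
  split_ifs <;> rfl

theorem subwordDFA_le_step (q : Fin (w.length + 1)) (a : α) : q ≤ (subwordDFA w).step q a := by
  rw [Fin.le_def, subwordDFA_step_val]
  split_ifs <;> omega

theorem subwordDFA_evalFrom_eq_last_iff (q : Fin (w.length + 1)) (u : List α) :
    (subwordDFA w).evalFrom q u = Fin.last _ ↔ (w.drop q).Sublist u := by
  induction u generalizing q with
  | nil =>
    simp only [DFA.evalFrom_nil, Fin.ext_iff, Fin.val_last, List.sublist_nil,
      List.drop_eq_nil_iff]
    omega
  | cons a u ih =>
    rw [DFA.evalFrom_cons, ih, List.drop_sublist_cons_iff, subwordDFA_step_val]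

theorem subwordDFA_accepts : (subwordDFA w).accepts = {u | w.Sublist u} := by
  ext u
  exact subwordDFA_evalFrom_eq_last_iff w 0 u

end SubwordDFA

theorem upwardClosure_weaklyAcyclic_general {α : Type} (w : List α) :
    Language.IsWeaklyAcyclic {u : List α | w.Sublist u} := by
  classical
  exact ⟨_, inferInstance, subwordDFA w,
    (subwordDFA w).weaklyAcyclic_of_le_step (subwordDFA_le_step w), subwordDFA_accepts w⟩

/-- The upward closure of a word under the (scattered) subword order is a weakly
acyclic language. -/
theorem upwardClosure_weaklyAcyclic {α : Type} [Fintype α] (w : List α) :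
    Language.IsWeaklyAcyclic {u : List α | w.Sublist u} :=
  upwardClosure_weaklyAcyclic_general w
end

section
/- Let Σ = {a, b} be a two-letter alphabet (a ≠ b). The language (a + b)*·b = {w ∈ Σ* : w is nonempty and its last letter is b} is not weakly acyclic; that is, no weakly acyclic DFA accepts it. -/
/-- Over a two-letter alphabet `{a, b}`, the language `(a + b)*·b` of words ending
with `b` is not weakly acyclic. -/
theorem endsWith_not_weaklyAcyclic {α : Type} [Fintype α] (a b : α) (hab : a ≠ b)
    (hcover : ∀ x : α, x = a ∨ x = b) :
    ¬ Language.IsWeaklyAcyclic {w : List α | ∃ u : List α, w = u ++ [b]} := by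
  rintro ⟨σ, _, A, hwa, hacc⟩
  -- the word (ab)^n
  set rep : ℕ → List α := fun n => (List.replicate n [a, b]).flatten with hrep
  have hrep_add : ∀ m k, rep (m + k) = rep m ++ rep k := by
    intro m k
    simp only [hrep]
    rw [List.replicate_add, List.flatten_append]
  set f : ℕ → σ := fun n => A.evalFrom A.start (rep n) with hf
  -- pigeonhole
  obtain ⟨m, n, hmn, heq⟩ := Finite.exists_ne_map_eq_of_infinite f
  wlog hlt : m < n generalizing m n
  · exact this n m hmn.symm heq.symm (by omega)
  obtain ⟨k, hk, rfl⟩ : ∃ k, 0 < k ∧ n = m + k := ⟨n - m, by omega, by omega⟩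
  have hloop : A.evalFrom (f m) (rep k) = f m := by
    have : f (m + k) = A.evalFrom (f m) (rep k) := by
      simp [hf, hrep_add, DFA.evalFrom_of_append]
    rw [← this, ← heq]
  have hne : rep k ≠ [] := by
    simp [hrep]
    omega
  have hstep : ∀ c ∈ rep k, A.step (f m) c = f m := hwa (f m) (rep k) hne hloop
  have hmem : ∀ c ∈ ([a, b] : List α), c ∈ rep k := by
    intro c hc
    simp only [hrep, List.mem_flatten]
    exact ⟨[a, b], List.mem_replicate.2 ⟨by omega, rfl⟩, hc⟩
  have hsa : A.step (f m) a = f m := hstep a (hmem a (by simp))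
  have hsb : A.step (f m) b = f m := hstep b (hmem b (by simp))
  -- rep m ++ [b] is accepted
  have hb : rep m ++ [b] ∈ A.accepts := by
    rw [hacc]; exact ⟨rep m, rfl⟩
  have hevb : A.eval (rep m ++ [b]) = f m := by
    rw [DFA.eval, DFA.evalFrom_append_singleton]
    exact hsb
  have hfacc : f m ∈ A.accept := by
    rw [DFA.mem_accepts, hevb] at hb; exact hb
  -- rep m ++ [a] is then also accepted, contradiction
  have ha : rep m ++ [a] ∈ A.accepts := by
    rw [DFA.mem_accepts, DFA.eval, DFA.evalFrom_append_singleton]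
    show A.step (f m) a ∈ A.accept
    rw [hsa]; exact hfacc
  rw [hacc] at ha
  obtain ⟨u, hu⟩ := ha
  have := (List.append_inj' hu rfl).2
  simp at this
  exact hab this
end

section
/- Let Σ = {a, b, c} (three distinct letters), let h : Σ → Σ be the map with h(a) = a, h(b) = b, h(c) = b, let K := {zip(u, h(u)) : u ∈ Σ*} ⊆ (Σ × Σ)* (where h is applied letterwise), and let L := {w c : w ∈ {a, b}*}. Then K and L are weakly acyclic languages, but Post(K, L) = {w b : w ∈ {a, b}*}, which is not a weakly acyclic language. -/
/-- `Post K L` is the set of words `v` such that `zip(u, v) ∈ K` and `u ∈ L`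
for some word `u` of the same length as `v`. -/
def Post {α : Type*} (K : Language (α × α)) (L : Language α) : Language α :=
  {v | ∃ u : List α, u.length = v.length ∧ u.zip v ∈ K ∧ u ∈ L}

namespace DFA

variable {α σ : Type*} {A : DFA α σ}

theorem le_evalFrom [Preorder σ] (hA : ∀ q x, q ≤ A.step q x) (q : σ) (w : List α) :
    q ≤ A.evalFrom q w := by
  induction w generalizing q with
  | nil => exact le_rfl
  | cons x w ih => exact (hA q x).trans (ih _)

/-- A loop `q → ⋯ → q` is squeezed between `q` and `q`, so every state on it is `q`. -/
theorem weaklyAcyclic_of_le_step_s19 [PartialOrder σ] (hA : ∀ q x, q ≤ A.step q x) :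
    A.WeaklyAcyclic := by
  intro q w _ hloop x hx
  obtain ⟨s, t, rfl⟩ := List.append_of_mem hx
  rw [evalFrom_of_append, evalFrom_cons] at hloop
  have h₁ : q ≤ A.evalFrom q s := le_evalFrom hA q s
  have h₂ := hA (A.evalFrom q s) x
  have h₃ : A.step (A.evalFrom q s) x ≤ q := (le_evalFrom hA _ t).trans_eq hloop
  have hr : A.evalFrom q s = q := le_antisymm (h₂.trans h₃) h₁
  rw [hr] at h₂ h₃
  exact le_antisymm h₃ h₂

theorem WeaklyAcyclic.exists_forall_step_eq [Finite σ] (hA : A.WeaklyAcyclic) (q : σ)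
    (v : List α) :
    ∃ n, ∀ x ∈ v, A.step (A.evalFrom q (List.replicate n v).flatten) x =
      A.evalFrom q (List.replicate n v).flatten := by
  obtain ⟨i, j, hij, heq⟩ :=
    Finite.exists_ne_map_eq_of_infinite fun n => A.evalFrom q (List.replicate n v).flatten
  wlog hlt : i < j generalizing i j
  · exact this j i hij.symm heq.symm (by omega)
  refine ⟨i, fun x hx => ?_⟩
  set w := (List.replicate (j - i) v).flatten
  have hloop : A.evalFrom (A.evalFrom q (List.replicate i v).flatten) w =
      A.evalFrom q (List.replicate i v).flatten := by
    rw [← evalFrom_of_append, ← List.flatten_append, ← List.replicate_add,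
      Nat.add_sub_cancel' hlt.le]
    exact heq.symm
  have hxw : x ∈ w := List.mem_flatten.2 ⟨v, List.mem_replicate.2 ⟨by omega, rfl⟩, hx⟩
  exact hA _ w (List.ne_nil_of_mem hxw) hloop x hxw

end DFA

namespace Language

variable {α : Type*}

open Classical in
noncomputable def forallMemDFA (p : α → Prop) : DFA α Bool where
  step q x := q || !decide (p x)
  start := false
  accept := {false}

theorem forallMemDFA_le_step (p : α → Prop) (q : Bool) (x : α) :
    q ≤ (forallMemDFA p).step q x := by
  cases q <;> simp [forallMemDFA]

theorem forallMemDFA_evalFrom_false_iff (p : α → Prop) (w : List α) :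
    (forallMemDFA p).evalFrom false w = false ↔ ∀ x ∈ w, p x := by
  induction w with
  | nil => simp
  | cons x w ih =>
    by_cases hx : p x
    · simpa [forallMemDFA, hx] using ih
    · have hw := DFA.le_evalFrom (forallMemDFA_le_step p) true w
      have hstep : (forallMemDFA p).step false x = true := by simp [forallMemDFA, hx]
      simp [DFA.evalFrom_cons, hstep, le_antisymm (Bool.le_true _) hw, hx]

theorem isWeaklyAcyclic_setOf_forall_mem (p : α → Prop) :
    IsWeaklyAcyclic {w : List α | ∀ x ∈ w, p x} :=
  ⟨Bool, inferInstance, forallMemDFA p, DFA.weaklyAcyclic_of_le_step_s19 (forallMemDFA_le_step p),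
    Set.ext fun w => forallMemDFA_evalFrom_false_iff p w⟩

open Classical in
/-- State `0` reads the prefix over `p`, state `1` has just read the final `c`, `2` is a sink. -/
noncomputable def appendSingletonDFA (p : α → Prop) (c : α) : DFA α (Fin 3) where
  step q x := if q = 0 ∧ p x then 0 else if q = 0 ∧ x = c then 1 else 2
  start := 0
  accept := {1}

variable {p : α → Prop} {c : α}

theorem appendSingletonDFA_le_step (q : Fin 3) (x : α) :
    q ≤ (appendSingletonDFA p c).step q x := by
  simp only [appendSingletonDFA]
  split_ifs <;> omega

theorem appendSingletonDFA_step_eq_one_iff (hc : ¬ p c) (q : Fin 3) (x : α) :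
    (appendSingletonDFA p c).step q x = 1 ↔ q = 0 ∧ x = c := by
  simp only [appendSingletonDFA]
  split_ifs <;> aesop

theorem appendSingletonDFA_evalFrom_zero_iff (w : List α) :
    (appendSingletonDFA p c).evalFrom 0 w = 0 ↔ ∀ x ∈ w, p x := by
  induction w with
  | nil => simp
  | cons x w ih =>
    by_cases hx : p x
    · simpa [appendSingletonDFA, hx] using ih
    · have hpos : 0 < (appendSingletonDFA p c).step 0 x := by
        simp only [appendSingletonDFA]; split_ifs <;> simp_all
      have := hpos.trans_le (DFA.le_evalFrom (appendSingletonDFA_le_step (p := p) (c := c)) _ w)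
      simp [DFA.evalFrom_cons, this.ne', hx]

theorem isWeaklyAcyclic_setOf_append_singleton (hc : ¬ p c) :
    IsWeaklyAcyclic {w : List α | ∃ u, (∀ x ∈ u, p x) ∧ w = u ++ [c]} := by
  refine ⟨Fin 3, inferInstance, appendSingletonDFA p c,
    DFA.weaklyAcyclic_of_le_step_s19 appendSingletonDFA_le_step, Set.ext fun w => ?_⟩
  change (appendSingletonDFA p c).evalFrom 0 w = 1 ↔ _
  rcases w.eq_nil_or_concat with rfl | ⟨u, x, rfl⟩
  · simp
  · simp [DFA.evalFrom_append_singleton, appendSingletonDFA_step_eq_one_iff hc,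
      appendSingletonDFA_evalFrom_zero_iff, eq_comm (a := x)]

theorem not_isWeaklyAcyclic_setOf_append_singleton {a b : α} (hab : a ≠ b)
    (ha : p a) (hb : p b) :
    ¬ IsWeaklyAcyclic {w : List α | ∃ u, (∀ x ∈ u, p x) ∧ w = u ++ [b]} := by
  rintro ⟨σ, _, A, hA, hL⟩
  obtain ⟨n, hn⟩ := hA.exists_forall_step_eq A.start [b, a]
  set u := (List.replicate n [b, a]).flatten
  have hu : ∀ x ∈ u, p x := by
    simp only [u, List.mem_flatten, List.mem_replicate]
    rintro x ⟨_, ⟨_, rfl⟩, hx⟩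
    simp only [List.mem_cons, List.not_mem_nil, or_false] at hx
    rcases hx with rfl | rfl <;> assumption
  have hua : u ++ [a] ∈ A.accepts ↔ u ++ [b] ∈ A.accepts := by
    simp only [DFA.mem_accepts, DFA.eval, DFA.evalFrom_append_singleton, hn a (by simp),
      hn b (by simp)]
  rw [hL] at hua
  obtain ⟨v, -, hv⟩ := hua.2 ⟨u, hu, rfl⟩
  exact hab (List.append_singleton_inj.1 hv).2

theorem setOf_exists_eq_zip_map {β : Type*} (h : α → β) :
    {w : List (α × β) | ∃ u : List α, w = u.zip (u.map h)} = {w | ∀ x ∈ w, x.2 = h x.1} := by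
  ext w
  constructor
  · rintro ⟨u, rfl⟩
    induction u with
    | nil => simp
    | cons x u ih => simpa [or_imp, forall_and] using ih
  · intro hw
    refine ⟨w.map Prod.fst, List.zip_of_prod rfl ?_⟩
    rw [List.map_map]
    exact List.map_congr_left hw

end Language

theorem post_setOf_exists_eq_zip_map {α : Type*} (h : α → α) (L : Language α) :
    Post {w : List (α × α) | ∃ u : List α, w = u.zip (u.map h)} L = List.map h '' L := by
  ext v
  constructor
  · rintro ⟨u, hlen, ⟨u', hu'⟩, hu⟩
    have h₁ : u = u' := by
      simpa [List.map_fst_zip hlen.le, List.map_fst_zip (List.length_map h).ge] using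
        congrArg (List.map Prod.fst) hu'
    have h₂ : v = u'.map h := by
      simpa [List.map_snd_zip hlen.ge, List.map_snd_zip (List.length_map h).le] using
        congrArg (List.map Prod.snd) hu'
    exact ⟨u, hu, by rw [h₁, h₂]⟩
  · rintro ⟨u, hu, rfl⟩
    exact ⟨u, List.length_map h ▸ rfl, ⟨u, rfl⟩, hu⟩

theorem image_map_setOf_append_singleton {α : Type*} {p : α → Prop} {h : α → α}
    (hfix : ∀ x, p x → h x = x) (c : α) :
    List.map h '' {w | ∃ u, (∀ x ∈ u, p x) ∧ w = u ++ [c]} =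
      {w | ∃ u, (∀ x ∈ u, p x) ∧ w = u ++ [h c]} := by
  have hmap : ∀ u : List α, (∀ x ∈ u, p x) → u.map h = u := fun u hu =>
    (List.map_congr_left fun x hx => hfix x (hu x hx)).trans (List.map_id u)
  ext w
  constructor
  · rintro ⟨_, ⟨u, hu, rfl⟩, rfl⟩
    exact ⟨u, hu, by rw [List.map_append, hmap u hu, List.map_singleton]⟩
  · rintro ⟨u, hu, rfl⟩
    exact ⟨u ++ [c], ⟨u, hu, rfl⟩, by rw [List.map_append, hmap u hu, List.map_singleton]⟩

theorem post_not_weaklyAcyclic_general {α : Type} (a b c : α)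
    (hab : a ≠ b) (hac : a ≠ c) (hbc : b ≠ c)
    (h : α → α) (hha : h a = a) (hhb : h b = b) (hhc : h c = b) :
    Language.IsWeaklyAcyclic {w : List (α × α) | ∃ u : List α, w = u.zip (u.map h)} ∧
    Language.IsWeaklyAcyclic
      {w : List α | ∃ u : List α, (∀ x ∈ u, x = a ∨ x = b) ∧ w = u ++ [c]} ∧
    Post {w : List (α × α) | ∃ u : List α, w = u.zip (u.map h)}
         {w : List α | ∃ u : List α, (∀ x ∈ u, x = a ∨ x = b) ∧ w = u ++ [c]}
      = {w : List α | ∃ u : List α, (∀ x ∈ u, x = a ∨ x = b) ∧ w = u ++ [b]} ∧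
    ¬ Language.IsWeaklyAcyclic
        (Post {w : List (α × α) | ∃ u : List α, w = u.zip (u.map h)}
              {w : List α | ∃ u : List α, (∀ x ∈ u, x = a ∨ x = b) ∧ w = u ++ [c]}) := by
  have hfix : ∀ x, x = a ∨ x = b → h x = x := by
    rintro x (rfl | rfl) <;> assumption
  have hpost : Post {w : List (α × α) | ∃ u : List α, w = u.zip (u.map h)}
      {w : List α | ∃ u : List α, (∀ x ∈ u, x = a ∨ x = b) ∧ w = u ++ [c]} =
      {w : List α | ∃ u : List α, (∀ x ∈ u, x = a ∨ x = b) ∧ w = u ++ [b]} :=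
    (post_setOf_exists_eq_zip_map h _).trans (hhc ▸ image_map_setOf_append_singleton hfix c)
  refine ⟨?_, Language.isWeaklyAcyclic_setOf_append_singleton (not_or.2 ⟨hac.symm, hbc.symm⟩),
    hpost, ?_⟩
  · rw [Language.setOf_exists_eq_zip_map]
    exact Language.isWeaklyAcyclic_setOf_forall_mem _
  · rw [hpost]
    exact Language.not_isWeaklyAcyclic_setOf_append_singleton hab (Or.inl rfl) (Or.inr rfl)

/-- Over `Σ = {a, b, c}` with the letterwise map `h` sending `a ↦ a`, `b ↦ b`,
`c ↦ b`: the relation `K = {zip(u, h(u))}` and the language `L = {a,b}*·c` are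
weakly acyclic, but `Post(K, L) = {a,b}*·b` is not weakly acyclic. -/
theorem post_not_weaklyAcyclic {α : Type} [Fintype α] (a b c : α)
    (hab : a ≠ b) (hac : a ≠ c) (hbc : b ≠ c)
    (hcover : ∀ x : α, x = a ∨ x = b ∨ x = c)
    (h : α → α) (hha : h a = a) (hhb : h b = b) (hhc : h c = b) :
    Language.IsWeaklyAcyclic {w : List (α × α) | ∃ u : List α, w = u.zip (u.map h)} ∧
    Language.IsWeaklyAcyclic
      {w : List α | ∃ u : List α, (∀ x ∈ u, x = a ∨ x = b) ∧ w = u ++ [c]} ∧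
    Post {w : List (α × α) | ∃ u : List α, w = u.zip (u.map h)}
         {w : List α | ∃ u : List α, (∀ x ∈ u, x = a ∨ x = b) ∧ w = u ++ [c]}
      = {w : List α | ∃ u : List α, (∀ x ∈ u, x = a ∨ x = b) ∧ w = u ++ [b]} ∧
    ¬ Language.IsWeaklyAcyclic
        (Post {w : List (α × α) | ∃ u : List α, w = u.zip (u.map h)}
              {w : List α | ∃ u : List α, (∀ x ∈ u, x = a ∨ x = b) ∧ w = u ++ [c]}) :=
  post_not_weaklyAcyclic_general a b c hab hac hbc h hha hhb hhc
end
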